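/- If X is a càdlàg path of finite p-variation with p ∈ [1,2) on [0,T] with values in ℝ^d, and one defines 𝕏_{s,t} as the Young integral ∫_{(s,t]} (X_{r-} − X_s) ⊗ dX_r, then 𝕏 has finite p/2-variation, i.e. sup over partitions P of ∑_{[s,t]∈P} |𝕏_{s,t}|^{p/2} < ∞. -/

import Mathlib

open scoped BigOperators
open MeasureTheory

noncomputable section

def IsPartition (a b : ℝ) (P : Finset ℝ) : Prop :=
  a ∈ P ∧ b ∈ P ∧ ∀ x ∈ P, x ∈ Set.Icc a b

noncomputable def nextPt (P : Finset ℝ) (b x : ℝ) : ℝ :=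
  WithBot.unbotD b (P.filter (fun y => x < y)).min

noncomputable def varSum {E : Type*} [NormedAddCommGroup E] (X : ℝ → E) (p b : ℝ)
    (P : Finset ℝ) : ℝ :=
  ∑ x ∈ P.erase b, ‖X (nextPt P b x) - X x‖ ^ p

def HasFiniteVar {E : Type*} [NormedAddCommGroup E] (X : ℝ → E) (p a b : ℝ) : Prop :=
  ∃ M : ℝ, ∀ P : Finset ℝ, IsPartition a b P → varSum X p b P ≤ M

noncomputable def varNorm {E : Type*} [NormedAddCommGroup E] (X : ℝ → E) (p a b : ℝ) : ℝ :=
  (sSup {v | ∃ P : Finset ℝ, IsPartition a b P ∧ v = varSum X p b P}) ^ (1 / p)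

def Cadlag {E : Type*} [NormedAddCommGroup E] (X : ℝ → E) (a b : ℝ) : Prop :=
  (∀ t ∈ Set.Ico a b, Filter.Tendsto X (nhdsWithin t (Set.Ici t)) (nhds (X t))) ∧
  (∀ t ∈ Set.Ioc a b, ∃ L : E, Filter.Tendsto X (nhdsWithin t (Set.Iio t)) (nhds L))

noncomputable def minus {E : Type*} [NormedAddCommGroup E] (X : ℝ → E) (a t : ℝ) : E :=
  if t ≤ a then X a else Function.leftLim X t

noncomputable def jump {E : Type*} [NormedAddCommGroup E] (X : ℝ → E) (a t : ℝ) : E :=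
  X t - minus X a t

def RRSTendsto {E : Type*} [NormedAddCommGroup E] (a b : ℝ) (S : Finset ℝ → E) (L : E) : Prop :=
  ∀ ε > 0, ∃ P₀ : Finset ℝ, IsPartition a b P₀ ∧
    ∀ P : Finset ℝ, IsPartition a b P → P₀ ⊆ P → ‖S P - L‖ < ε


noncomputable def varSum2 {F : Type*} [NormedAddCommGroup F] (Ξ : ℝ → ℝ → F) (q b : ℝ)
    (P : Finset ℝ) : ℝ :=
  ∑ x ∈ P.erase b, ‖Ξ x (nextPt P b x)‖ ^ q

def HasFiniteVar2 {F : Type*} [NormedAddCommGroup F] (Ξ : ℝ → ℝ → F) (q a b : ℝ) : Prop :=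
  ∃ M : ℝ, ∀ P : Finset ℝ, IsPartition a b P → varSum2 Ξ q b P ≤ M

/-!
Young's argument by successive point removal, for `∫ B(X_{r-} - X_s, dX_r)` with a bounded
bilinear `B` (the theorem takes `B(x, y) = x ⊗ y`). Write `ω(s,t) = ‖X‖_{p-var;[s,t]}^p` and let
`u` be the first point after `s` of a partition of `[s, t]`. Removing a point `c > u` with
neighbours `x₀ < c < y₀` changes the Riemann sum by `B(X_{c-} - X_{x₀-}, X_{y₀} - X_c)`, of norm
at most `‖B‖ ω(w, y₀)^{2/p}` where `w` is the point before `x₀`. The windows `[w, y₀]` of points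
whose indices agree mod 3 are disjoint, so by superadditivity some `c` has
`ω(w, y₀) ≤ 3 ω(s,t) / k` when `k` points remain removable. Removing points down to `{s, u, t}`
thus costs at most `‖B‖ (3 ω(s,t))^{2/p} ζ(2/p)`, finite since `p < 2`. Of the two remaining
summands one is at most `‖B‖ ω(s,t)^{2/p}`, and the other is small when `u` is close to `s`, by
right-continuity. Hence `‖𝕏_{s,t}‖^{p/2} ≲ ω(s,t)`, and superadditivity of `ω` bounds the
`p/2`-variation sums.
-/

open Finset Filter Topology Function

def prevPt (P : Finset ℝ) (a x : ℝ) : ℝ :=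
  WithBot.unbotD a (P.filter (fun y => y < x)).max

def partitionSum {G : Type*} [AddCommMonoid G] (f : ℝ → ℝ → G) (b : ℝ) (P : Finset ℝ) : G :=
  ∑ x ∈ P.erase b, f x (nextPt P b x)

section Partition

variable {P Q : Finset ℝ} {a b c x y : ℝ}

lemma nextPt_eq_of (hy : y ∈ P) (hxy : x < y) (hmin : ∀ z ∈ P, x < z → y ≤ z) :
    nextPt P b x = y := by
  have h : (P.filter (fun w => x < w)).min = (y : WithTop ℝ) :=
    le_antisymm (Finset.min_le (mem_filter.2 ⟨hy, hxy⟩)) <| Finset.le_min fun z hz =>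
      WithTop.coe_le_coe.2 (hmin z (mem_filter.1 hz).1 (mem_filter.1 hz).2)
  rw [nextPt, h]
  rfl

lemma prevPt_eq_of (hy : y ∈ P) (hyx : y < x) (hmax : ∀ z ∈ P, z < x → z ≤ y) :
    prevPt P a x = y := by
  have h : (P.filter (fun w => w < x)).max = (y : WithBot ℝ) :=
    le_antisymm (Finset.max_le fun z hz =>
      WithBot.coe_le_coe.2 (hmax z (mem_filter.1 hz).1 (mem_filter.1 hz).2))
      (Finset.le_max (mem_filter.2 ⟨hy, hyx⟩))
  rw [prevPt, h]
  rfl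

lemma nextPt_spec (hb : b ∈ P) (hx : x < b) :
    nextPt P b x ∈ P ∧ x < nextPt P b x ∧ ∀ z ∈ P, x < z → nextPt P b x ≤ z := by
  have hne : (P.filter (fun w => x < w)).Nonempty := ⟨b, mem_filter.2 ⟨hb, hx⟩⟩
  obtain ⟨hmem, hlt⟩ := mem_filter.1 (min'_mem _ hne)
  have hle : ∀ z ∈ P, x < z → (P.filter (fun w => x < w)).min' hne ≤ z :=
    fun z hz hxz => min'_le _ z (mem_filter.2 ⟨hz, hxz⟩)
  rw [nextPt_eq_of hmem hlt hle]
  exact ⟨hmem, hlt, hle⟩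

lemma prevPt_spec (ha : a ∈ P) (hx : a < x) :
    prevPt P a x ∈ P ∧ prevPt P a x < x ∧ ∀ z ∈ P, z < x → z ≤ prevPt P a x := by
  have hne : (P.filter (fun w => w < x)).Nonempty := ⟨a, mem_filter.2 ⟨ha, hx⟩⟩
  obtain ⟨hmem, hlt⟩ := mem_filter.1 (max'_mem _ hne)
  have hle : ∀ z ∈ P, z < x → z ≤ (P.filter (fun w => w < x)).max' hne :=
    fun z hz hzx => le_max' _ z (mem_filter.2 ⟨hz, hzx⟩)
  rw [prevPt_eq_of hmem hlt hle]
  exact ⟨hmem, hlt, hle⟩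

lemma nextPt_prevPt (ha : a ∈ P) (hc : c ∈ P) (hac : a < c) : nextPt P b (prevPt P a c) = c := by
  obtain ⟨-, hlt, hmax⟩ := prevPt_spec ha hac
  exact nextPt_eq_of hc hlt fun z hz hxz => not_lt.1 fun hzc => (hmax z hz hzc).not_gt hxz

lemma IsPartition.le (hP : IsPartition a b P) : a ≤ b := (hP.2.2 a hP.1).2

lemma IsPartition.nextPt_spec (hP : IsPartition a b P) (hx : x ∈ P.erase b) :
    nextPt P b x ∈ P ∧ a ≤ x ∧ x < nextPt P b x ∧ nextPt P b x ≤ b := by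
  obtain ⟨hxb, hxP⟩ := mem_erase.1 hx
  obtain ⟨hyP, hxy, -⟩ := _root_.nextPt_spec hP.2.1 (lt_of_le_of_ne (hP.2.2 x hxP).2 hxb)
  exact ⟨hyP, (hP.2.2 x hxP).1, hxy, (hP.2.2 _ hyP).2⟩

lemma isPartition_pair (hab : a ≤ b) : IsPartition a b {a, b} := by
  refine ⟨by simp, by simp, fun x hx => ?_⟩
  rcases mem_insert.1 hx with rfl | hx
  · exact ⟨le_rfl, hab⟩
  · rw [mem_singleton.1 hx]
    exact ⟨hab, le_rfl⟩

lemma IsPartition.union (hP : IsPartition a c P) (hQ : IsPartition c b Q) :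
    IsPartition a b (P ∪ Q) := by
  refine ⟨mem_union_left _ hP.1, mem_union_right _ hQ.2.1, fun x hx => ?_⟩
  rcases mem_union.1 hx with h | h
  · exact ⟨(hP.2.2 x h).1, (hP.2.2 x h).2.trans hQ.le⟩
  · exact ⟨hP.le.trans (hQ.2.2 x h).1, (hQ.2.2 x h).2⟩

lemma IsPartition.erase (hP : IsPartition a b P) (hca : c ≠ a) (hcb : c ≠ b) :
    IsPartition a b (P.erase c) :=
  ⟨mem_erase.2 ⟨hca.symm, hP.1⟩, mem_erase.2 ⟨hcb.symm, hP.2.1⟩,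
    fun x hx => hP.2.2 x (mem_erase.1 hx).2⟩

lemma IsPartition.insert (hP : IsPartition a b P) (hc : c ∈ Set.Icc a b) :
    IsPartition a b (insert c P) := by
  refine ⟨mem_insert_of_mem hP.1, mem_insert_of_mem hP.2.1, fun x hx => ?_⟩
  rcases mem_insert.1 hx with rfl | h
  exacts [hc, hP.2.2 x h]

end Partition

section PartitionSum

variable {G : Type*} {P Q : Finset ℝ} {a b c : ℝ}

lemma partitionSum_union [AddCommMonoid G] (f : ℝ → ℝ → G) (hP : IsPartition a c P)
    (hQ : IsPartition c b Q) :
    partitionSum f b (P ∪ Q) = partitionSum f c P + partitionSum f b Q := by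
  have hcb := hQ.le
  have hsplit : (P ∪ Q).erase b = P.erase c ∪ Q.erase b := by
    ext x
    simp only [mem_erase, mem_union]
    constructor
    · rintro ⟨hxb, hx | hx⟩
      · by_cases hxc : x = c
        · exact Or.inr ⟨hxb, hxc ▸ hQ.1⟩
        · exact Or.inl ⟨hxc, hx⟩
      · exact Or.inr ⟨hxb, hx⟩
    · rintro (⟨hxc, hx⟩ | ⟨hxb, hx⟩)
      · exact ⟨(lt_of_lt_of_le (lt_of_le_of_ne (hP.2.2 x hx).2 hxc) hcb).ne, Or.inl hx⟩
      · exact ⟨hxb, Or.inr hx⟩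
  have hdisj : Disjoint (P.erase c) (Q.erase b) := by
    refine disjoint_left.2 fun x hx hx' => ?_
    obtain ⟨hxc, hxP⟩ := mem_erase.1 hx
    exact (lt_of_le_of_ne (hP.2.2 x hxP).2 hxc).not_ge (hQ.2.2 x (mem_erase.1 hx').2).1
  rw [partitionSum, hsplit, sum_union hdisj]
  congr 1
  · refine sum_congr rfl fun x hx => ?_
    obtain ⟨hyP, -, hxy, hyc⟩ := hP.nextPt_spec hx
    obtain ⟨-, -, hmin⟩ := _root_.nextPt_spec hP.2.1 (hxy.trans_le hyc)
    rw [nextPt_eq_of (mem_union_left _ hyP) hxy fun z hz hxz => ?_]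
    rcases mem_union.1 hz with h | h
    exacts [hmin z h hxz, hyc.trans (hQ.2.2 z h).1]
  · refine sum_congr rfl fun x hx => ?_
    obtain ⟨hyQ, hcx, hxy, -⟩ := hQ.nextPt_spec hx
    obtain ⟨-, -, hmin⟩ := _root_.nextPt_spec hQ.2.1 (hxy.trans_le (hQ.2.2 _ hyQ).2)
    rw [nextPt_eq_of (mem_union_right _ hyQ) hxy fun z hz hxz => ?_]
    rcases mem_union.1 hz with h | h
    exacts [absurd hxz ((hP.2.2 z h).2.trans hcx).not_gt, hmin z h hxz]

lemma partitionSum_pair [AddCommMonoid G] (f : ℝ → ℝ → G) (hab : a < b) :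
    partitionSum f b {a, b} = f a b := by
  have hnext : nextPt {a, b} b a = b := nextPt_eq_of (by simp) hab fun z hz haz => by
    rcases mem_insert.1 hz with rfl | hz
    exacts [absurd haz (lt_irrefl _), (mem_singleton.1 hz).ge]
  rw [partitionSum, erase_insert_of_ne hab.ne, erase_singleton, insert_empty, sum_singleton, hnext]

lemma partitionSum_triple [AddCommMonoid G] (f : ℝ → ℝ → G) (hab : a < b) (hbc : b < c) :
    partitionSum f c {a, b, c} = f a b + f b c := by
  have h : ({a, b, c} : Finset ℝ) = {a, b} ∪ {b, c} := by
    ext; simp only [mem_insert, mem_singleton, mem_union]; tauto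
  rw [h, partitionSum_union f (isPartition_pair hab.le) (isPartition_pair hbc.le),
    partitionSum_pair f hab, partitionSum_pair f hbc]

lemma partitionSum_sub_partitionSum_erase [AddCommGroup G] (f : ℝ → ℝ → G)
    (hP : IsPartition a b P) (hc : c ∈ P) (hca : c ≠ a) (hcb : c ≠ b) :
    partitionSum f b P - partitionSum f b (P.erase c) =
      f (prevPt P a c) c + f c (nextPt P b c) - f (prevPt P a c) (nextPt P b c) := by
  have hac : a < c := lt_of_le_of_ne (hP.2.2 c hc).1 hca.symm
  have hcb' : c < b := lt_of_le_of_ne (hP.2.2 c hc).2 hcb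
  set x₀ := prevPt P a c
  set y₀ := nextPt P b c
  obtain ⟨hx₀P, hx₀c, hx₀max⟩ := prevPt_spec hP.1 hac
  obtain ⟨hy₀P, hcy₀, hy₀min⟩ := nextPt_spec hP.2.1 hcb'
  have hnext_x₀ : nextPt (P.erase c) b x₀ = y₀ := by
    refine nextPt_eq_of (mem_erase.2 ⟨hcy₀.ne', hy₀P⟩) (hx₀c.trans hcy₀) fun z hz hxz => ?_
    obtain ⟨hzc, hzP⟩ := mem_erase.1 hz
    rcases lt_or_gt_of_ne hzc with h | h
    exacts [absurd (hx₀max z hzP h) hxz.not_ge, hy₀min z hzP h]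
  have hnext_other : ∀ x ∈ ((P.erase b).erase c).erase x₀,
      nextPt (P.erase c) b x = nextPt P b x := by
    intro x hx
    simp only [mem_erase] at hx
    obtain ⟨hxx₀, hxc, hxb, hxP⟩ := hx
    obtain ⟨hyP, hxy, hymin⟩ := nextPt_spec hP.2.1 (lt_of_le_of_ne (hP.2.2 x hxP).2 hxb)
    have hyc : nextPt P b x ≠ c := fun h => by
      have hxx₀' : x < x₀ := lt_of_le_of_ne (hx₀max x hxP (h ▸ hxy)) hxx₀
      exact (hymin x₀ hx₀P hxx₀').not_gt (h ▸ hx₀c)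
    exact nextPt_eq_of (mem_erase.2 ⟨hyc, hyP⟩) hxy fun z hz hxz => hymin z (mem_erase.1 hz).2 hxz
  have hcmem : c ∈ P.erase b := mem_erase.2 ⟨hcb, hc⟩
  have hx₀mem : x₀ ∈ (P.erase b).erase c :=
    mem_erase.2 ⟨hx₀c.ne, mem_erase.2 ⟨(hx₀c.trans hcb').ne, hx₀P⟩⟩
  have hP_split : partitionSum f b P = f c y₀ + (f x₀ c +
      ∑ x ∈ ((P.erase b).erase c).erase x₀, f x (nextPt P b x)) := by
    rw [partitionSum, ← add_sum_erase _ _ hcmem, ← add_sum_erase _ _ hx₀mem,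
      nextPt_prevPt hP.1 hc hac]
  have hPc_split : partitionSum f b (P.erase c) = f x₀ y₀ +
      ∑ x ∈ ((P.erase b).erase c).erase x₀, f x (nextPt P b x) := by
    rw [partitionSum, erase_right_comm, ← add_sum_erase _ _ hx₀mem, hnext_x₀]
    exact congrArg _ (sum_congr rfl fun x hx => by rw [hnext_other x hx])
  rw [hP_split, hPc_split]
  abel

end PartitionSum

def SuperadditiveOn (ω : ℝ → ℝ → ℝ) (s t : ℝ) : Prop :=
  ∀ a b c, s ≤ a → a ≤ b → b ≤ c → c ≤ t → ω a b + ω b c ≤ ω a c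

namespace SuperadditiveOn

variable {ω : ℝ → ℝ → ℝ} {s t : ℝ}

lemma sum_le (hω : SuperadditiveOn ω s t) (h0 : ∀ a b, 0 ≤ ω a b) (hst : s ≤ t)
    {ι : Type*} (S : Finset ι) (lo hi : ι → ℝ) (hbd : ∀ i ∈ S, s ≤ lo i ∧ lo i < hi i ∧ hi i ≤ t)
    (hdisj : ∀ i ∈ S, ∀ j ∈ S, i ≠ j → hi i ≤ lo j ∨ hi j ≤ lo i) :
    ∑ i ∈ S, ω (lo i) (hi i) ≤ ω s t := by
  classical
  suffices ∀ u, s ≤ u → u ≤ t → (∀ i ∈ S, hi i ≤ u) → ∑ i ∈ S, ω (lo i) (hi i) ≤ ω s u from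
    this t hst le_rfl fun i hi => (hbd i hi).2.2
  induction S using Finset.induction_on_max_value lo with
  | empty => exact fun u _ _ _ => by simpa using h0 s u
  | insert i S hiS hmax ih =>
    intro u hsu hut hhi
    obtain ⟨hsi, hlo_hi, -⟩ := hbd i (mem_insert_self i S)
    have hhiu := hhi i (mem_insert_self i S)
    have hrest : ∀ j ∈ S, hi j ≤ lo i := fun j hj => by
      have hji : j ≠ i := fun h => hiS (h ▸ hj)
      rcases hdisj j (mem_insert_of_mem hj) i (mem_insert_self i S) hji with h | h
      · exact h
      · exact absurd (hlo_hi.trans_le (h.trans (hmax j hj))) (lt_irrefl _)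
    have hS := ih (fun j hj => hbd j (mem_insert_of_mem hj))
      (fun j hj k hk => hdisj j (mem_insert_of_mem hj) k (mem_insert_of_mem hk))
      (lo i) hsi (hlo_hi.le.trans (hhiu.trans hut)) hrest
    rw [sum_insert hiS]
    calc ω (lo i) (hi i) + ∑ j ∈ S, ω (lo j) (hi j)
        ≤ ω s (lo i) + ω (lo i) (hi i) + ω (hi i) u := by
          linarith [h0 (hi i) u]
      _ ≤ ω s (hi i) + ω (hi i) u := by
          gcongr; exact hω s (lo i) (hi i) le_rfl hsi hlo_hi.le (hhiu.trans hut)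
      _ ≤ ω s u := hω s (hi i) u le_rfl (hsi.trans hlo_hi.le) hhiu hut

lemma partitionSum_le (hω : SuperadditiveOn ω s t) (h0 : ∀ a b, 0 ≤ ω a b) {P : Finset ℝ}
    (hP : IsPartition s t P) :
    partitionSum ω t P ≤ ω s t := by
  refine hω.sum_le h0 hP.le _ id (nextPt P t) (fun x hx => ?_) fun x hx y hy hxy => ?_
  · obtain ⟨-, hsx, hxy, hyt⟩ := hP.nextPt_spec hx
    exact ⟨hsx, hxy, hyt⟩
  · have hnext : ∀ {x y}, x ∈ P.erase t → y ∈ P → x < y → nextPt P t x ≤ y := fun hx hy hxy =>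
      (_root_.nextPt_spec hP.2.1 (lt_of_le_of_ne (hP.2.2 _ (mem_erase.1 hx).2).2
        (mem_erase.1 hx).1)).2.2 _ hy hxy
    rcases lt_or_gt_of_ne hxy with h | h
    exacts [Or.inl (hnext hx (mem_erase.1 hy).2 h), Or.inr (hnext hy (mem_erase.1 hx).2 h)]

lemma hasFiniteVar2 {F : Type*} [NormedAddCommGroup F] {Ξ : ℝ → ℝ → F} {q K : ℝ}
    (hω : SuperadditiveOn ω s t) (h0 : ∀ a b, 0 ≤ ω a b) (hK : 0 ≤ K)
    (h : ∀ x y, s ≤ x → x < y → y ≤ t → ‖Ξ x y‖ ^ q ≤ K * ω x y) : HasFiniteVar2 Ξ q s t := by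
  refine ⟨K * ω s t, fun P hP => ?_⟩
  calc varSum2 Ξ q t P ≤ K * partitionSum ω t P := by
        rw [partitionSum, mul_sum]
        refine sum_le_sum fun x hx => ?_
        obtain ⟨-, hsx, hxy, hyt⟩ := hP.nextPt_spec hx
        exact h x _ hsx hxy hyt
    _ ≤ K * ω s t := by
        gcongr
        exact hω.partitionSum_le h0 hP

lemma le_of_subinterval (hω : SuperadditiveOn ω s t)
    (h0 : ∀ a b, 0 ≤ ω a b) {x y : ℝ} (hsx : s ≤ x) (hxy : x ≤ y)
    (hyt : y ≤ t) : ω x y ≤ ω s t := by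
  have h1 := hω s x y le_rfl hsx hxy hyt
  have h2 := hω s y t le_rfl (hsx.trans hxy) hyt le_rfl
  linarith [h0 s x, h0 y t]

end SuperadditiveOn

section PVariation

variable {E : Type*} [NormedAddCommGroup E] {X : ℝ → E} {p a b s t x y v : ℝ} {P : Finset ℝ}

/-- `ω(s,t) = ‖X‖_{p-var;[s,t]}^p`. -/
def pVar (X : ℝ → E) (p s t : ℝ) : ℝ :=
  sSup {v | ∃ P : Finset ℝ, IsPartition s t P ∧ v = varSum X p t P}

lemma varSum_nonneg (X : ℝ → E) (p b : ℝ) (P : Finset ℝ) : 0 ≤ varSum X p b P :=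
  sum_nonneg fun _ _ => Real.rpow_nonneg (norm_nonneg _) p

lemma pVar_nonneg (X : ℝ → E) (p s t : ℝ) : 0 ≤ pVar X p s t :=
  Real.sSup_nonneg fun _ ⟨_, _, hv⟩ => hv ▸ varSum_nonneg X p t _

lemma pVar_le {B : ℝ} (hst : s ≤ t) (h : ∀ P, IsPartition s t P → varSum X p t P ≤ B) :
    pVar X p s t ≤ B :=
  csSup_le ⟨_, _, isPartition_pair hst, rfl⟩ fun _ ⟨P, hP, hv⟩ => hv ▸ h P hP

lemma HasFiniteVar.varSum_le_pVar (hX : HasFiniteVar X p s t) (hP : IsPartition s t P) :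
    varSum X p t P ≤ pVar X p s t := by
  obtain ⟨M, hM⟩ := hX
  exact le_csSup ⟨M, fun _ ⟨Q, hQ, hv⟩ => hv ▸ hM Q hQ⟩ ⟨P, hP, rfl⟩

lemma varSum_union {Q : Finset ℝ} (hP : IsPartition a s P) (hQ : IsPartition s b Q) :
    varSum X p b (P ∪ Q) = varSum X p s P + varSum X p b Q :=
  partitionSum_union (fun x y => ‖X y - X x‖ ^ p) hP hQ

lemma varSum_pair (hxy : x < y) : varSum X p y {x, y} = ‖X y - X x‖ ^ p :=
  partitionSum_pair (fun x y => ‖X y - X x‖ ^ p) hxy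

lemma HasFiniteVar.mono (hX : HasFiniteVar X p a b) (has : a ≤ s) (htb : t ≤ b) :
    HasFiniteVar X p s t := by
  obtain ⟨M, hM⟩ := hX
  refine ⟨M, fun P hP => ?_⟩
  have hleft := (isPartition_pair has).union hP
  calc varSum X p t P ≤ varSum X p s {a, s} + varSum X p t P + varSum X p b {t, b} := by
        linarith [varSum_nonneg X p s {a, s}, varSum_nonneg X p b {t, b}]
    _ = varSum X p b ({a, s} ∪ P ∪ {t, b}) := by
        rw [varSum_union hleft (isPartition_pair htb), varSum_union (isPartition_pair has) hP]
    _ ≤ M := hM _ (hleft.union (isPartition_pair htb))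

lemma HasFiniteVar.pVar_superadditiveOn (hX : HasFiniteVar X p a b) :
    SuperadditiveOn (pVar X p) a b := by
  intro s u t has hsu hut htb
  have hsum : ∀ P, IsPartition s u P → ∀ Q, IsPartition u t Q →
      varSum X p u P + varSum X p t Q ≤ pVar X p s t := fun P hP Q hQ => by
    rw [← varSum_union hP hQ]
    exact (hX.mono has htb).varSum_le_pVar (hP.union hQ)
  have h : pVar X p s u ≤ pVar X p s t - pVar X p u t :=
    pVar_le hsu fun P hP => le_sub_comm.2 <| pVar_le hut fun Q hQ =>
      le_sub_iff_add_le'.2 (hsum P hP Q hQ)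
  linarith

lemma HasFiniteVar.pVar_le_of_subinterval (hX : HasFiniteVar X p s t) (hsx : s ≤ x)
    (hxy : x ≤ y) (hyt : y ≤ t) : pVar X p x y ≤ pVar X p s t :=
  hX.pVar_superadditiveOn.le_of_subinterval (pVar_nonneg X p) hsx hxy hyt

lemma HasFiniteVar.norm_sub_le (hX : HasFiniteVar X p s t) (hp : 0 < p) (hsx : s ≤ x)
    (hxy : x ≤ y) (hyt : y ≤ t) : ‖X y - X x‖ ≤ pVar X p s t ^ p⁻¹ := by
  rw [Real.le_rpow_inv_iff_of_pos (norm_nonneg _) (pVar_nonneg X p s t) hp]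
  rcases hxy.eq_or_lt with rfl | hxy
  · simpa [Real.zero_rpow hp.ne'] using pVar_nonneg X p s t
  have hpair := (hX.mono hsx hyt).varSum_le_pVar (isPartition_pair hxy.le)
  rw [varSum_pair hxy] at hpair
  exact hpair.trans (hX.pVar_le_of_subinterval hsx hxy.le hyt)

lemma HasFiniteVar.norm_leftLim_sub_le (hX : HasFiniteVar X p s t) (hp : 0 < p)
    (hy : Tendsto X (𝓝[<] y) (𝓝 (leftLim X y))) (hsv : s ≤ v) (hvy : v < y) (hyt : y ≤ t) :
    ‖leftLim X y - X v‖ ≤ pVar X p s t ^ p⁻¹ :=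
  le_of_tendsto (hy.sub_const (X v)).norm <|
    eventually_of_mem (Ioo_mem_nhdsLT_of_mem ⟨hvy, le_rfl⟩) fun _ hz =>
      hX.norm_sub_le hp hsv hz.1.le (hz.2.le.trans hyt)

lemma HasFiniteVar.norm_leftLim_sub_leftLim_le (hX : HasFiniteVar X p s t) (hp : 0 < p)
    (hx : Tendsto X (𝓝[<] x) (𝓝 (leftLim X x))) (hy : Tendsto X (𝓝[<] y) (𝓝 (leftLim X y)))
    (hsx : s < x) (hxy : x < y) (hyt : y ≤ t) :
    ‖leftLim X y - leftLim X x‖ ≤ pVar X p s t ^ p⁻¹ :=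
  le_of_tendsto (hx.const_sub (leftLim X y)).norm <|
    eventually_of_mem (Ioo_mem_nhdsLT_of_mem ⟨hsx, le_rfl⟩) fun _ hz =>
      hX.norm_leftLim_sub_le hp hy hz.1.le (hz.2.trans hxy) hyt

lemma Cadlag.mono (hX : Cadlag X a b) (has : a ≤ s) (htb : t ≤ b) : Cadlag X s t :=
  ⟨fun x hx => hX.1 x ⟨has.trans hx.1, hx.2.trans_le htb⟩,
    fun x hx => hX.2 x ⟨has.trans_lt hx.1, hx.2.trans htb⟩⟩

lemma Cadlag.tendsto_leftLim (hX : Cadlag X a b) (hy : y ∈ Set.Ioc a b) :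
    Tendsto X (𝓝[<] y) (𝓝 (leftLim X y)) := by
  obtain ⟨L, hL⟩ := hX.2 y hy
  rwa [leftLim_eq_of_tendsto hL]

lemma Cadlag.exists_near_right (hX : Cadlag X s t) (hst : s < t) {y δ : ℝ} (hsy : s < y)
    (hδ : 0 < δ) : ∃ u ∈ Set.Ioo s y, ‖X u - X s‖ < δ := by
  have hright : Tendsto X (𝓝[>] s) (𝓝 (X s)) :=
    (hX.1 s ⟨le_rfl, hst⟩).mono_left (nhdsWithin_mono s Set.Ioi_subset_Ici_self)
  obtain ⟨u, hu, hXu⟩ := ((eventually_of_mem (Ioo_mem_nhdsGT_of_mem ⟨le_rfl, hsy⟩) fun _ h => h).and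
    (Metric.tendsto_nhds.1 hright δ hδ)).exists
  exact ⟨u, hu, by rwa [← dist_eq_norm]⟩

lemma minus_of_lt (X : ℝ → E) (h : a < t) : minus X a t = leftLim X t := if_neg h.not_ge

end PVariation

section Window

variable {P : Finset ℝ} {s t u c x y : ℝ}

def countBelow (P : Finset ℝ) (x : ℝ) : ℕ := #(P.filter (· < x))

lemma countBelow_lt_countBelow (hx : x ∈ P) (hxy : x < y) : countBelow P x < countBelow P y :=
  card_lt_card <| (ssubset_iff_of_subset (monotone_filter_right P fun _ _ hz => hz.trans hxy)).2
    ⟨x, mem_filter.2 ⟨hx, hxy⟩, fun h => lt_irrefl x (mem_filter.1 h).2⟩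

lemma le_of_countBelow_le (hy : y ∈ P) (h : countBelow P x ≤ countBelow P y) : x ≤ y :=
  not_lt.1 fun hyx => (countBelow_lt_countBelow hy hyx).not_ge h

lemma countBelow_nextPt (ht : t ∈ P) (hc : c ∈ P) (hct : c < t) :
    countBelow P (nextPt P t c) = countBelow P c + 1 := by
  obtain ⟨-, hcy, hmin⟩ := nextPt_spec ht hct
  have : P.filter (· < nextPt P t c) = insert c (P.filter (· < c)) := by
    ext z
    simp only [mem_filter, mem_insert]
    constructor
    · rintro ⟨hzP, hz⟩
      rcases lt_trichotomy z c with h | rfl | h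
      exacts [Or.inr ⟨hzP, h⟩, Or.inl rfl, absurd (hmin z hzP h) hz.not_ge]
    · rintro (rfl | ⟨hzP, hz⟩)
      exacts [⟨hc, hcy⟩, ⟨hzP, hz.trans hcy⟩]
  rw [countBelow, this, card_insert_of_notMem (by simp)]
  rfl

lemma countBelow_prevPt (hs : s ∈ P) (hc : c ∈ P) (hsc : s < c) :
    countBelow P c = countBelow P (prevPt P s c) + 1 := by
  obtain ⟨hxP, hxc, -⟩ := prevPt_spec hs hsc
  conv_lhs => rw [← nextPt_prevPt (b := c) hs hc hsc]
  exact countBelow_nextPt hc hxP hxc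

namespace SuperadditiveOn

variable {ω : ℝ → ℝ → ℝ}

lemma sum_window_le (hω : SuperadditiveOn ω s t) (h0 : ∀ a b, 0 ≤ ω a b)
    (hP : IsPartition s t P) (hu : u ∈ P) (hsu : s < u) {R : Finset ℝ} (hR : ∀ c ∈ R, c ∈ P ∧ u < c ∧ c < t) :
    ∑ c ∈ R, ω (prevPt P s (prevPt P s c)) (nextPt P t c) ≤ 3 * ω s t := by
  set w := fun c => prevPt P s (prevPt P s c)
  have hwin : ∀ c ∈ R, w c ∈ P ∧ s ≤ w c ∧ w c < nextPt P t c ∧ nextPt P t c ≤ t ∧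
      countBelow P c = countBelow P (w c) + 2 ∧
      countBelow P (nextPt P t c) = countBelow P c + 1 := by
    intro c hcR
    obtain ⟨hc, huc, hct⟩ := hR c hcR
    obtain ⟨hxP, hxc, hxmax⟩ := prevPt_spec hP.1 (hsu.trans huc)
    have hsx : s < prevPt P s c := hsu.trans_le (hxmax u hu huc)
    obtain ⟨hwP, hwx, -⟩ := prevPt_spec hP.1 hsx
    obtain ⟨hyP, hcy, -⟩ := nextPt_spec hP.2.1 hct
    refine ⟨hwP, (hP.2.2 _ hwP).1, hwx.trans (hxc.trans hcy), (hP.2.2 _ hyP).2, ?_,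
      countBelow_nextPt hP.2.1 hc hct⟩
    rw [countBelow_prevPt hP.1 hc (hsu.trans huc), countBelow_prevPt hP.1 hxP hsx]
  have hfiber : ∀ r ∈ range 3,
      ∑ c ∈ R with countBelow P c % 3 = r, ω (w c) (nextPt P t c) ≤ ω s t := by
    intro r _
    refine hω.sum_le h0 hP.le _ w (nextPt P t) (fun c hc => ?_) fun c hc c' hc' hne => ?_
    · obtain ⟨-, h1, h2, h3, -⟩ := hwin c (mem_filter.1 hc).1
      exact ⟨h1, h2, h3⟩
    · obtain ⟨hcR, hcr⟩ := mem_filter.1 hc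
      obtain ⟨hc'R, hc'r⟩ := mem_filter.1 hc'
      obtain ⟨hw, -, -, -, hcw, hcy⟩ := hwin c hcR
      obtain ⟨hw', -, -, -, hcw', hcy'⟩ := hwin c' hc'R
      rcases lt_or_gt_of_ne hne with h | h
      · have := countBelow_lt_countBelow (hR c hcR).1 h
        exact Or.inl (le_of_countBelow_le hw' (by omega))
      · have := countBelow_lt_countBelow (hR c' hc'R).1 h
        exact Or.inr (le_of_countBelow_le hw (by omega))
  calc ∑ c ∈ R, ω (w c) (nextPt P t c)
      = ∑ r ∈ range 3, ∑ c ∈ R with countBelow P c % 3 = r, ω (w c) (nextPt P t c) :=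
        (sum_fiberwise_of_maps_to (fun c _ => mem_range.2 (Nat.mod_lt _ (by norm_num))) _).symm
    _ ≤ ∑ r ∈ range 3, ω s t := sum_le_sum hfiber
    _ = 3 * ω s t := by simp

lemma exists_window_le (hω : SuperadditiveOn ω s t) (h0 : ∀ a b, 0 ≤ ω a b)
    (hP : IsPartition s t P) (hu : u ∈ P) (hsu : s < u) {R : Finset ℝ}
    (hR : ∀ c ∈ R, c ∈ P ∧ u < c ∧ c < t) (hRne : R.Nonempty) :
    ∃ c ∈ R, ω (prevPt P s (prevPt P s c)) (nextPt P t c) ≤ 3 * ω s t / #R := by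
  refine exists_le_of_sum_le hRne ?_
  rw [sum_const, nsmul_eq_mul, mul_div_cancel₀ _ (by positivity)]
  exact hω.sum_window_le h0 hP hu hsu hR

end SuperadditiveOn

lemma rpow_inv_mul_rpow_inv {x p : ℝ} (hx : 0 ≤ x) (hp : 0 < p) :
    x ^ p⁻¹ * x ^ p⁻¹ = x ^ (2 / p) := by
  rw [← Real.rpow_add' hx (by positivity)]
  ring_nf

lemma rpow_div_two_le_of_le_mul_rpow {A K ω p : ℝ} (hA : 0 ≤ A) (hK : 0 ≤ K) (hω : 0 ≤ ω)
    (hp : 0 < p) (h : A ≤ K * ω ^ (2 / p)) : A ^ (p / 2) ≤ K ^ (p / 2) * ω := by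
  calc A ^ (p / 2) ≤ (K * ω ^ (2 / p)) ^ (p / 2) := by gcongr
    _ = K ^ (p / 2) * ω := by
      rw [Real.mul_rpow hK (Real.rpow_nonneg hω _), ← Real.rpow_mul hω,
        show 2 / p * (p / 2) = 1 by field_simp, Real.rpow_one]

lemma sum_Icc_div_rpow_le {c q : ℝ} (hc : 0 ≤ c) (hq : 1 < q) (n : ℕ) :
    ∑ k ∈ Icc 1 n, (c / k) ^ q ≤ c ^ q * ∑' k : ℕ, 1 / (k : ℝ) ^ q := by
  simp_rw [Real.div_rpow hc (Nat.cast_nonneg _), div_eq_mul_one_div (c ^ q)]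
  rw [← mul_sum]
  gcongr
  exact (Real.summable_one_div_nat_rpow.2 hq).sum_le_tsum _ fun k _ => by positivity

section YoungEstimate

variable {E G : Type*} [NormedAddCommGroup E] [NormedSpace ℝ E] [NormedAddCommGroup G]
  [NormedSpace ℝ G] (B : E →L[ℝ] E →L[ℝ] G) {X : ℝ → E} {p a s t u c : ℝ} {P : Finset ℝ}

/-- The left-point summand of `∫_{(s,t]} B(X_{r-} - X_s, dX_r)`. -/
def youngSummand (X : ℝ → E) (a s x y : ℝ) : G := B (minus X a x - X s) (X y - X x)

lemma youngSummand_add_sub (X : ℝ → E) (a s x₀ c y₀ : ℝ) :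
    youngSummand B X a s x₀ c + youngSummand B X a s c y₀ - youngSummand B X a s x₀ y₀ =
      B (minus X a c - minus X a x₀) (X y₀ - X c) := by
  simp only [youngSummand, map_sub, _root_.sub_apply]
  abel

/-- The window starts one point left of `x₀ = prevPt P s c` because `X_{x₀-}` depends on the
path just before `x₀`. -/
lemma norm_partitionSum_sub_erase_le (hXc : Cadlag X s t) (hX : HasFiniteVar X p s t)
    (hp : 0 < p) (has : a ≤ s) (hP : IsPartition s t P) (hc : c ∈ P) (hsc : s < c) (hct : c < t)
    (hsx : s < prevPt P s c) :
    ‖partitionSum (youngSummand B X a s) t P - partitionSum (youngSummand B X a s) t (P.erase c)‖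
      ≤ ‖B‖ * pVar X p (prevPt P s (prevPt P s c)) (nextPt P t c) ^ (2 / p) := by
  set x₀ := prevPt P s c
  set w := prevPt P s x₀
  set y₀ := nextPt P t c
  obtain ⟨hx₀P, hx₀c, -⟩ := prevPt_spec hP.1 hsc
  obtain ⟨hwP, hwx₀, -⟩ := prevPt_spec hP.1 hsx
  obtain ⟨hy₀P, hcy₀, -⟩ := nextPt_spec hP.2.1 hct
  have hsw : s ≤ w := (hP.2.2 w hwP).1
  have hy₀t : y₀ ≤ t := (hP.2.2 y₀ hy₀P).2
  have hXw : HasFiniteVar X p w y₀ := hX.mono hsw hy₀t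
  have hleft : ‖minus X a c - minus X a x₀‖ ≤ pVar X p w y₀ ^ p⁻¹ := by
    rw [minus_of_lt X (has.trans_lt hsc), minus_of_lt X (has.trans_lt hsx)]
    exact hXw.norm_leftLim_sub_leftLim_le hp (hXc.tendsto_leftLim ⟨hsx, (hx₀c.trans hct).le⟩)
      (hXc.tendsto_leftLim ⟨hsc, hct.le⟩) hwx₀ hx₀c hcy₀.le
  have hright : ‖X y₀ - X c‖ ≤ pVar X p w y₀ ^ p⁻¹ :=
    hXw.norm_sub_le hp (hwx₀.trans hx₀c).le hcy₀.le le_rfl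
  rw [partitionSum_sub_partitionSum_erase _ hP hc hsc.ne' hct.ne, youngSummand_add_sub,
    ← rpow_inv_mul_rpow_inv (pVar_nonneg X p w y₀) hp, ← mul_assoc]
  refine (B.le_opNorm₂ _ _).trans ?_
  gcongr
  exact mul_nonneg (norm_nonneg B) (Real.rpow_nonneg (pVar_nonneg X p w y₀) _)

lemma exists_erase_le (hXc : Cadlag X s t) (hX : HasFiniteVar X p s t) (hp : 0 < p)
    (has : a ≤ s) (hsu : s < u) (hut : u < t) {n : ℕ} (hP : IsPartition s t P) (hu : u ∈ P)
    (hfirst : ∀ x ∈ P, s < x → u ≤ x) (hcard : #P = n + 4) :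
    ∃ c ∈ P, u < c ∧ c < t ∧
      ‖partitionSum (youngSummand B X a s) t P - partitionSum (youngSummand B X a s) t (P.erase c)‖
        ≤ ‖B‖ * (3 * pVar X p s t / ↑(n + 1)) ^ (2 / p) := by
  set R := ((P.erase s).erase u).erase t
  have hR : ∀ c ∈ R, c ∈ P ∧ u < c ∧ c < t := by
    intro c hc
    simp only [R, mem_erase] at hc
    obtain ⟨hct, hcu, hcs, hc⟩ := hc
    have hsc : s < c := lt_of_le_of_ne (hP.2.2 c hc).1 (Ne.symm hcs)
    exact ⟨hc, lt_of_le_of_ne (hfirst c hc hsc) (Ne.symm hcu), lt_of_le_of_ne (hP.2.2 c hc).2 hct⟩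
  have hRcard : #R = n + 1 := by
    rw [card_erase_of_mem (by simp [hut.ne', (hsu.trans hut).ne', hP.2.1]),
      card_erase_of_mem (by simp [hsu.ne', hu]), card_erase_of_mem hP.1, hcard]
    rfl
  obtain ⟨c, hcR, hwin⟩ := hX.pVar_superadditiveOn.exists_window_le (pVar_nonneg X p) hP hu hsu
    hR (card_pos.1 (by omega))
  obtain ⟨hc, huc, hct⟩ := hR c hcR
  have hsx : s < prevPt P s c := hsu.trans_le ((prevPt_spec hP.1 (hsu.trans huc)).2.2 u hu huc)
  refine ⟨c, hc, huc, hct,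
    (norm_partitionSum_sub_erase_le B hXc hX hp has hP hc (hsu.trans huc) hct hsx).trans ?_⟩
  rw [hRcard] at hwin
  gcongr
  exact pVar_nonneg X p _ _

lemma norm_partitionSum_sub_triple_le (hXc : Cadlag X s t) (hX : HasFiniteVar X p s t)
    (hp : 0 < p) (has : a ≤ s) (hsu : s < u) (hut : u < t) (n : ℕ) (hP : IsPartition s t P)
    (hu : u ∈ P) (hfirst : ∀ x ∈ P, s < x → u ≤ x) (hcard : #P = n + 3) :
    ‖partitionSum (youngSummand B X a s) t P - partitionSum (youngSummand B X a s) t {s, u, t}‖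
      ≤ ‖B‖ * ∑ k ∈ Icc 1 n, (3 * pVar X p s t / k) ^ (2 / p) := by
  set S := partitionSum (youngSummand B X a s) t
  induction n generalizing P with
  | zero =>
    have hsub : ({s, u, t} : Finset ℝ) ⊆ P := by simp [insert_subset_iff, hP.1, hu, hP.2.1]
    have hcard3 : #({s, u, t} : Finset ℝ) = 3 :=
      card_triple_eq_three_iff.2 ⟨hsu.ne, (hsu.trans hut).ne, hut.ne⟩
    rw [eq_of_subset_of_card_le hsub (by rw [hcard, hcard3]), sub_self, norm_zero]
    simp
  | succ n ih =>
    obtain ⟨c, hc, huc, hct, hstep⟩ := exists_erase_le B hXc hX hp has hsu hut hP hu hfirst hcard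
    have hIH := ih (hP.erase (hsu.trans huc).ne' hct.ne) (mem_erase.2 ⟨huc.ne, hu⟩)
      (fun x hx => hfirst x (mem_erase.1 hx).2) (by rw [card_erase_of_mem hc, hcard]; rfl)
    calc ‖S P - S {s, u, t}‖ ≤ ‖S P - S (P.erase c)‖ + ‖S (P.erase c) - S {s, u, t}‖ :=
          norm_sub_le_norm_sub_add_norm_sub _ _ _
      _ ≤ ‖B‖ * (3 * pVar X p s t / ↑(n + 1)) ^ (2 / p) +
          ‖B‖ * ∑ k ∈ Icc 1 n, (3 * pVar X p s t / k) ^ (2 / p) := add_le_add hstep hIH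
      _ = ‖B‖ * ∑ k ∈ Icc 1 (n + 1), (3 * pVar X p s t / k) ^ (2 / p) := by
          rw [sum_Icc_succ_top (by omega), mul_add, add_comm]

def youngConstant (p : ℝ) : ℝ := 1 + 3 ^ (2 / p) * ∑' k : ℕ, 1 / (k : ℝ) ^ (2 / p)

lemma youngConstant_nonneg (p : ℝ) : 0 ≤ youngConstant p :=
  add_nonneg zero_le_one (mul_nonneg (by positivity) (tsum_nonneg fun _ => by positivity))

lemma norm_partitionSum_le (hXc : Cadlag X s t) (hX : HasFiniteVar X p s t) (hp : 0 < p)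
    (hp2 : p < 2) (has : a ≤ s) (hsu : s < u) (hut : u < t) (hP : IsPartition s t P)
    (hu : u ∈ P) (hfirst : ∀ x ∈ P, s < x → u ≤ x) :
    ‖partitionSum (youngSummand B X a s) t P‖ ≤
      ‖B‖ * ‖minus X a s - X s‖ * ‖X u - X s‖ + ‖B‖ * youngConstant p * pVar X p s t ^ (2 / p) := by
  set ω := pVar X p s t
  have hω : 0 ≤ ω := pVar_nonneg X p s t
  set S := partitionSum (youngSummand B X a s) t
  have hcard : #P = #P - 3 + 3 := by
    have := card_le_card (show ({s, u, t} : Finset ℝ) ⊆ P by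
      simp [insert_subset_iff, hP.1, hu, hP.2.1])
    rw [card_triple_eq_three_iff.2 ⟨hsu.ne, (hsu.trans hut).ne, hut.ne⟩] at this
    omega
  have hremove : ‖S P - S {s, u, t}‖ ≤
      ‖B‖ * (3 ^ (2 / p) * ∑' k : ℕ, 1 / (k : ℝ) ^ (2 / p)) * ω ^ (2 / p) := by
    refine (norm_partitionSum_sub_triple_le B hXc hX hp has hsu hut _ hP hu hfirst hcard).trans ?_
    rw [mul_assoc, mul_right_comm _ (tsum _), ← Real.mul_rpow (by norm_num) hω]
    gcongr
    exact sum_Icc_div_rpow_le (by positivity) ((one_lt_div hp).2 hp2) _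
  have hsu_term : ‖youngSummand B X a s s u‖ ≤ ‖B‖ * ‖minus X a s - X s‖ * ‖X u - X s‖ :=
    B.le_opNorm₂ _ _
  have hut_term : ‖youngSummand B X a s u t‖ ≤ ‖B‖ * ω ^ (2 / p) := by
    rw [← rpow_inv_mul_rpow_inv hω hp, ← mul_assoc]
    refine (B.le_opNorm₂ _ _).trans ?_
    rw [minus_of_lt X (has.trans_lt hsu)]
    gcongr
    · exact hX.norm_leftLim_sub_le hp (hXc.tendsto_leftLim ⟨hsu, hut.le⟩) le_rfl hsu hut.le
    · exact hX.norm_sub_le hp hsu.le hut.le le_rfl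
  calc ‖S P‖ = ‖S P - S {s, u, t} + youngSummand B X a s s u + youngSummand B X a s u t‖ := by
        rw [show S {s, u, t} = _ from partitionSum_triple _ hsu hut, add_assoc, sub_add_cancel]
    _ ≤ ‖S P - S {s, u, t}‖ + ‖youngSummand B X a s s u‖ + ‖youngSummand B X a s u t‖ :=
        norm_add₃_le
    _ ≤ _ := add_le_add_three hremove hsu_term hut_term
    _ = _ := by rw [youngConstant]; ring

theorem norm_le_of_rrsTendsto (hXc : Cadlag X s t) (hX : HasFiniteVar X p s t) (hp : 0 < p)
    (hp2 : p < 2) (has : a ≤ s) (hst : s < t) {L : G}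
    (hL : RRSTendsto s t (partitionSum (youngSummand B X a s) t) L) :
    ‖L‖ ≤ ‖B‖ * youngConstant p * pVar X p s t ^ (2 / p) := by
  set C := ‖B‖ * ‖minus X a s - X s‖
  refine le_of_forall_pos_le_add fun ε hε => ?_
  have hδ : 0 < ε / (1 + C) := by positivity
  obtain ⟨P₀, hP₀, hnear⟩ := hL _ hδ
  obtain ⟨-, hsy, hy_min⟩ := nextPt_spec hP₀.2.1 hst
  obtain ⟨u, ⟨hsu, huy⟩, hXu⟩ := hXc.exists_near_right hst hsy hδ
  have hut : u < t := huy.trans_le (hy_min t hP₀.2.1 hst)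
  have hP : IsPartition s t (insert u P₀) := hP₀.insert ⟨hsu.le, hut.le⟩
  have hbound := norm_partitionSum_le B hXc hX hp hp2 has hsu hut hP (mem_insert_self u P₀)
    fun x hx hsx => by
      rcases mem_insert.1 hx with rfl | hx
      exacts [le_rfl, huy.le.trans (hy_min x hx hsx)]
  have hclose := hnear _ hP (subset_insert u P₀)
  have hCu : C * ‖X u - X s‖ ≤ C * (ε / (1 + C)) := by gcongr
  have hε_split : ε / (1 + C) + C * (ε / (1 + C)) = ε := by
    have : 0 < 1 + C := by positivity
    field_simp
  have := norm_sub_norm_le L (partitionSum (youngSummand B X a s) t (insert u P₀))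
  rw [norm_sub_rev] at this
  linarith

end YoungEstimate

def outerProduct (d : ℕ) :
    EuclideanSpace ℝ (Fin d) →L[ℝ] EuclideanSpace ℝ (Fin d) →L[ℝ] (Fin d → Fin d → ℝ) :=
  LinearMap.mkContinuous₂
    (LinearMap.mk₂ ℝ (fun u v i j => u i * v j) (fun _ _ _ => by ext; simp [add_mul])
      (fun _ _ _ => by ext; simp [mul_assoc]) (fun _ _ _ => by ext; simp [mul_add])
      (fun _ _ _ => by ext; simp [mul_left_comm]))
    1 fun u v => by
      refine (pi_norm_le_iff_of_nonneg (by positivity)).2 fun i =>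
        (pi_norm_le_iff_of_nonneg (by positivity)).2 fun j => ?_
      rw [LinearMap.mk₂_apply, norm_mul, one_mul]
      exact mul_le_mul (PiLp.norm_apply_le u i) (PiLp.norm_apply_le v j) (norm_nonneg _)
        (norm_nonneg _)

theorem young_lift_finite_half_p_variation_general
    {d : ℕ} (T p : ℝ) (hp1 : 1 ≤ p) (hp2 : p < 2)
    (X : ℝ → EuclideanSpace ℝ (Fin d))
    (hXc : Cadlag X 0 T) (hXv : HasFiniteVar X p 0 T)
    (𝕏 : ℝ → ℝ → (Fin d → Fin d → ℝ))
    (h𝕏 : ∀ s t : ℝ, 0 ≤ s → s < t → t ≤ T →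
      RRSTendsto s t
        (fun P => ∑ x ∈ P.erase t,
          (fun i j => (minus X 0 x i - X s i) * (X (nextPt P t x) j - X x j)
            : Fin d → Fin d → ℝ))
        (𝕏 s t)) :
    HasFiniteVar2 𝕏 (p / 2) 0 T := by
  have hp : 0 < p := by linarith
  have hK : 0 ≤ ‖outerProduct d‖ * youngConstant p :=
    mul_nonneg (outerProduct d).opNorm_nonneg (youngConstant_nonneg p)
  refine hXv.pVar_superadditiveOn.hasFiniteVar2 (pVar_nonneg X p) (Real.rpow_nonneg hK _)
    fun x y hx hxy hyT => rpow_div_two_le_of_le_mul_rpow (norm_nonneg _) hK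
      (pVar_nonneg X p x y) hp ?_
  exact norm_le_of_rrsTendsto (outerProduct d) (hXc.mono hx hyT) (hXv.mono hx hyT) hp hp2 hx hxy
    (h𝕏 x y hx hxy hyT)

/-- If `X` is a càdlàg path of finite `p`-variation, `p ∈ [1,2)`, and
`𝕏_{s,t} = ∫_{(s,t]} (X_{r-} − X_s) ⊗ dX_r` is the Young integral (the
refinement-Riemann–Stieltjes limit of left-point Riemann sums), then `𝕏` has finite
`p/2`-variation. -/
theorem young_lift_finite_half_p_variation
    {d : ℕ} (T p : ℝ) (hT : 0 < T) (hp1 : 1 ≤ p) (hp2 : p < 2)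
    (X : ℝ → EuclideanSpace ℝ (Fin d))
    (hXc : Cadlag X 0 T) (hXv : HasFiniteVar X p 0 T)
    (𝕏 : ℝ → ℝ → (Fin d → Fin d → ℝ))
    (h𝕏 : ∀ s t : ℝ, 0 ≤ s → s < t → t ≤ T →
      RRSTendsto s t
        (fun P => ∑ x ∈ P.erase t,
          (fun i j => (minus X 0 x i - X s i) * (X (nextPt P t x) j - X x j)
            : Fin d → Fin d → ℝ))
        (𝕏 s t)) :
    HasFiniteVar2 𝕏 (p / 2) 0 T :=
  young_lift_finite_half_p_variation_general T p hp1 hp2 X hXc hXv 𝕏 h𝕏
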